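/- Let G₁, …, G₈ be the eight three-qubit GHZ states viewed in ℂ² ⊗ (ℂ² ⊗ ℂ²), and let k ≥ 1. For any two functions α, α' : Fin k → {1, …, 8}, there exist unitary operators U₁, …, U_k on the two-qubit space ℂ² ⊗ ℂ² such that G_{α'(1)} ⊗ G_{α'(2)} ⊗ ⋯ ⊗ G_{α'(k)} = ((I ⊗ U₁) ⊗ (I ⊗ U₂) ⊗ ⋯ ⊗ (I ⊗ U_k)) (G_{α(1)} ⊗ G_{α(2)} ⊗ ⋯ ⊗ G_{α(k)}) in the k-fold tensor power of ℂ² ⊗ (ℂ² ⊗ ℂ²). Hence any two tensor products of k GHZ states (in any order, with any composition) are related by a unitary acting trivially on the first qubit of every copy, i.e., acting only on the collaborating parties' 2k qubits. -/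

import Mathlib

/-! Each GHZ state is obtained from `G₁` by a product of Pauli operators on the last two
qubits: `G_a = (I ⊗ P_a) G₁`. Hence the unitary `I ⊗ P_{a'} P_a⋆` maps `G_a` to `G_{a'}`, and
since `(I ⊗ U₁) ⊗ ⋯ ⊗ (I ⊗ U_k)` acts factorwise on a product vector, these single-copy
unitaries relate any two tensor products of GHZ states. -/

open scoped InnerProductSpace

noncomputable section

/-- The standard basis kets `|0⟩, |1⟩` of a qubit `ℂ² = EuclideanSpace ℂ (Fin 2)`. -/
def ket2 (i : Fin 2) : EuclideanSpace ℂ (Fin 2) := EuclideanSpace.single i 1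

/-- Tensor product of vectors of Euclidean spaces, realized concretely:
`(x ⊗ y) (i, j) = x i * y j`.  The induced inner product on
`EuclideanSpace ℂ (ι × κ)` is exactly the tensor-product inner product. -/
def tp {ι κ : Type*} [Fintype ι] [Fintype κ]
    (x : EuclideanSpace ℂ ι) (y : EuclideanSpace ℂ κ) : EuclideanSpace ℂ (ι × κ) :=
  (WithLp.equiv 2 _).symm fun p => x p.1 * y p.2

/-- The three-qubit basis state `|abc⟩ = |a⟩ ⊗ |b⟩ ⊗ |c⟩`. -/
def ket3 (a b c : Fin 2) : EuclideanSpace ℂ (Fin 2 × Fin 2 × Fin 2) :=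
  tp (ket2 a) (tp (ket2 b) (ket2 c))

/-- The eight three-qubit GHZ states `G₁, …, G₈` (indexed here by `0,…,7`). -/
def GHZ : Fin 8 → EuclideanSpace ℂ (Fin 2 × Fin 2 × Fin 2) :=
  ![((Real.sqrt 2 : ℂ))⁻¹ • (ket3 0 0 0 + ket3 1 1 1),
    ((Real.sqrt 2 : ℂ))⁻¹ • (ket3 0 0 0 - ket3 1 1 1),
    ((Real.sqrt 2 : ℂ))⁻¹ • (ket3 0 0 1 + ket3 1 1 0),
    ((Real.sqrt 2 : ℂ))⁻¹ • (ket3 0 0 1 - ket3 1 1 0),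
    ((Real.sqrt 2 : ℂ))⁻¹ • (ket3 0 1 0 + ket3 1 0 1),
    ((Real.sqrt 2 : ℂ))⁻¹ • (ket3 0 1 0 - ket3 1 0 1),
    ((Real.sqrt 2 : ℂ))⁻¹ • (ket3 1 0 0 + ket3 0 1 1),
    ((Real.sqrt 2 : ℂ))⁻¹ • (ket3 1 0 0 - ket3 0 1 1)]

/-- The product vector `G_{α 1} ⊗ ⋯ ⊗ G_{α k}` in the `k`-fold tensor power of
`ℂ² ⊗ (ℂ² ⊗ ℂ²)`, realized on the index type `Fin k → Fin 2 × Fin 2 × Fin 2`. -/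
def GHZprod (k : ℕ) (α : Fin k → Fin 8) :
    EuclideanSpace ℂ (Fin k → Fin 2 × Fin 2 × Fin 2) :=
  (WithLp.equiv 2 _).symm fun x => ∏ i, GHZ (α i) (x i)

/-- The operator `(I ⊗ U₁) ⊗ (I ⊗ U₂) ⊗ ⋯ ⊗ (I ⊗ U_k)` on the `k`-fold tensor power
of `ℂ² ⊗ (ℂ² ⊗ ℂ²)`: each `U i` is a matrix acting on the last two qubits of the
`i`-th copy, and the identity acts on the first qubit of every copy. -/
def idTensorMatPow (k : ℕ) (U : Fin k → Matrix (Fin 2 × Fin 2) (Fin 2 × Fin 2) ℂ)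
    (v : EuclideanSpace ℂ (Fin k → Fin 2 × Fin 2 × Fin 2)) :
    EuclideanSpace ℂ (Fin k → Fin 2 × Fin 2 × Fin 2) :=
  (WithLp.equiv 2 _).symm fun x =>
    ∑ y : Fin k → Fin 2 × Fin 2, (∏ i, U i (x i).2 (y i)) * v fun i => ((x i).1, y i)

open Matrix
open scoped Kronecker

section idTensorMat

variable {𝕜 ι κ : Type*} [RCLike 𝕜] [Fintype κ]

def idTensorMat (U : Matrix κ κ 𝕜) (v : EuclideanSpace 𝕜 (ι × κ)) : EuclideanSpace 𝕜 (ι × κ) :=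
  WithLp.toLp 2 fun x => ∑ y, U x.2 y * v (x.1, y)

theorem idTensorMat_mul (A B : Matrix κ κ 𝕜) (v : EuclideanSpace 𝕜 (ι × κ)) :
    idTensorMat (A * B) v = idTensorMat A (idTensorMat B v) := by
  ext x
  simp only [idTensorMat, PiLp.toLp_apply, Matrix.mul_apply, Finset.sum_mul, Finset.mul_sum,
    mul_assoc]
  exact Finset.sum_comm

end idTensorMat

theorem idTensorMatPow_prod (k : ℕ) (U : Fin k → Matrix (Fin 2 × Fin 2) (Fin 2 × Fin 2) ℂ)
    (v : Fin k → EuclideanSpace ℂ (Fin 2 × Fin 2 × Fin 2)) :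
    idTensorMatPow k U (WithLp.toLp 2 fun x => ∏ i, v i (x i)) =
      WithLp.toLp 2 fun x => ∏ i, idTensorMat (U i) (v i) (x i) := by
  ext x
  simp only [idTensorMatPow, idTensorMat, WithLp.equiv_symm_apply, PiLp.toLp_apply,
    Finset.prod_univ_sum, Fintype.piFinset_univ, Finset.prod_mul_distrib]

def pauliX : Matrix (Fin 2) (Fin 2) ℂ := !![0, 1; 1, 0]

def pauliZ : Matrix (Fin 2) (Fin 2) ℂ := !![1, 0; 0, -1]

theorem pauliX_mem_unitaryGroup : pauliX ∈ unitaryGroup (Fin 2) ℂ := by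
  rw [mem_unitaryGroup_iff]
  ext i j
  fin_cases i <;> fin_cases j <;> simp [pauliX, Matrix.mul_apply, Fin.sum_univ_two]

theorem pauliZ_mem_unitaryGroup : pauliZ ∈ unitaryGroup (Fin 2) ℂ := by
  rw [mem_unitaryGroup_iff]
  ext i j
  fin_cases i <;> fin_cases j <;> simp [pauliZ, Matrix.mul_apply, Fin.sum_univ_two]

def ghzPauli : Fin 8 → Matrix (Fin 2 × Fin 2) (Fin 2 × Fin 2) ℂ :=
  ![1 ⊗ₖ 1, pauliZ ⊗ₖ 1, 1 ⊗ₖ pauliX, pauliZ ⊗ₖ pauliX,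
    pauliX ⊗ₖ 1, (pauliX * pauliZ) ⊗ₖ 1, pauliX ⊗ₖ pauliX, (pauliZ * pauliX) ⊗ₖ pauliX]

theorem ghzPauli_mem_unitaryGroup (a : Fin 8) : ghzPauli a ∈ unitaryGroup (Fin 2 × Fin 2) ℂ := by
  have hX := pauliX_mem_unitaryGroup
  have hZ := pauliZ_mem_unitaryGroup
  have h1 : (1 : Matrix (Fin 2) (Fin 2) ℂ) ∈ unitaryGroup (Fin 2) ℂ := one_mem _
  fin_cases a
  exacts [kronecker_mem_unitary h1 h1, kronecker_mem_unitary hZ h1, kronecker_mem_unitary h1 hX,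
    kronecker_mem_unitary hZ hX, kronecker_mem_unitary hX h1,
    kronecker_mem_unitary (mul_mem hX hZ) h1, kronecker_mem_unitary hX hX,
    kronecker_mem_unitary (mul_mem hZ hX) hX]

set_option maxHeartbeats 400000 in
theorem GHZ_eq_idTensorMat_ghzPauli (a : Fin 8) : GHZ a = idTensorMat (ghzPauli a) (GHZ 0) := by
  ext ⟨p, q₁, q₂⟩
  fin_cases a <;> fin_cases p <;> fin_cases q₁ <;> fin_cases q₂ <;>
    simp [GHZ, ghzPauli, idTensorMat, ket3, tp, ket2, pauliX, pauliZ, Fintype.sum_prod_type,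
      Fin.sum_univ_two, PiLp.single_apply]

theorem exists_unitary_idTensorMat_GHZ_eq (a a' : Fin 8) :
    ∃ U ∈ unitaryGroup (Fin 2 × Fin 2) ℂ, idTensorMat U (GHZ a) = GHZ a' := by
  refine ⟨ghzPauli a' * star (ghzPauli a),
    mul_mem (ghzPauli_mem_unitaryGroup a') (Unitary.star_mem (ghzPauli_mem_unitaryGroup a)), ?_⟩
  rw [GHZ_eq_idTensorMat_ghzPauli a, ← idTensorMat_mul, mul_assoc,
    Unitary.star_mul_self_of_mem (ghzPauli_mem_unitaryGroup a), mul_one,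
    ← GHZ_eq_idTensorMat_ghzPauli]

theorem GHZ_tensor_products_related_by_local_unitaries_general
    (k : ℕ) (α α' : Fin k → Fin 8) :
    ∃ U : Fin k → Matrix (Fin 2 × Fin 2) (Fin 2 × Fin 2) ℂ,
      (∀ i, U i ∈ Matrix.unitaryGroup (Fin 2 × Fin 2) ℂ) ∧
      GHZprod k α' = idTensorMatPow k U (GHZprod k α) := by
  choose U hU hUGHZ using fun i => exists_unitary_idTensorMat_GHZ_eq (α i) (α' i)
  refine ⟨U, hU, ?_⟩
  simp only [GHZprod, WithLp.equiv_symm_apply, idTensorMatPow_prod, hUGHZ]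

/-- For `k ≥ 1` and any two functions `α, α' : Fin k → {1,…,8}`,
there exist unitaries `U₁, …, U_k` on the two-qubit space `ℂ² ⊗ ℂ²` such that
`G_{α' 1} ⊗ ⋯ ⊗ G_{α' k} = ((I ⊗ U₁) ⊗ ⋯ ⊗ (I ⊗ U_k)) (G_{α 1} ⊗ ⋯ ⊗ G_{α k})`:
any two tensor products of `k` GHZ states are related by a unitary acting trivially
on the first qubit of every copy. -/
theorem GHZ_tensor_products_related_by_local_unitaries
    (k : ℕ) (hk : 1 ≤ k) (α α' : Fin k → Fin 8) :
    ∃ U : Fin k → Matrix (Fin 2 × Fin 2) (Fin 2 × Fin 2) ℂ,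
      (∀ i, U i ∈ Matrix.unitaryGroup (Fin 2 × Fin 2) ℂ) ∧
      GHZprod k α' = idTensorMatPow k U (GHZprod k α) :=
  GHZ_tensor_products_related_by_local_unitaries_general k α α'

end
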